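/- Let T[f] denote the Toeplitz operator with bounded measurable symbol f on an N-dimensional subspace H ⊂ L²(ν) with orthogonal projection Π: L²(ν) → H, i.e. T[f] = Π ∘ (multiplication by f). Then Tr(T[f²]) − Tr(T[f]²) = Σ_{i=1}^N ‖ f sᵢ − Π(f sᵢ) ‖² ≥ 0 for any orthonormal basis (sᵢ) of H; in particular Tr(T[f]²) ≤ Tr(T[f²]). -/

import Mathlib

/-!
The coefficient `cᵢⱼ = ∫ f s̄ᵢ sⱼ` is the inner product `⟪sᵢ, f sⱼ⟫` in `L²(ν)`, so
`Σᵢ cᵢⱼ sᵢ` is the orthogonal projection of `f sⱼ` onto `span (sᵢ)`. By Pythagoras the squared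
residual of this projection is `‖f sⱼ‖² - Σᵢ |cᵢⱼ|²`; summing over `j` gives the identity, and
the residuals are nonnegative.
-/

open MeasureTheory
open scoped BigOperators ComplexConjugate

section Bessel

variable {𝕜 E ι : Type*} [RCLike 𝕜] [SeminormedAddCommGroup E] [InnerProductSpace 𝕜 E]

local notation "⟪" x ", " y "⟫" => inner 𝕜 x y

theorem Orthonormal.norm_sub_sum_inner_smul_sq {v : ι → E} (hv : Orthonormal 𝕜 v)
    (t : Finset ι) (x : E) :
    ‖x - ∑ i ∈ t, ⟪v i, x⟫ • v i‖ ^ 2 = ‖x‖ ^ 2 - ∑ i ∈ t, ‖⟪v i, x⟫‖ ^ 2 := by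
  set p := ∑ i ∈ t, ⟪v i, x⟫ • v i
  have hp : ‖p‖ ^ 2 = ∑ i ∈ t, ‖⟪v i, x⟫‖ ^ 2 := by
    rw [@norm_sq_eq_re_inner 𝕜, hv.inner_sum]
    simp only [RCLike.conj_mul, ← RCLike.ofReal_pow, map_sum, RCLike.ofReal_re]
  have hxp : RCLike.re ⟪x, p⟫ = ‖p‖ ^ 2 := by
    have hterm : ∀ i, ⟪x, ⟪v i, x⟫ • v i⟫ = ((‖⟪v i, x⟫‖ ^ 2 : ℝ) : 𝕜) := fun i => by
      rw [inner_smul_right, ← inner_conj_symm x, RCLike.mul_conj, RCLike.ofReal_pow]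
    simp only [hp, p, inner_sum, hterm, map_sum, RCLike.ofReal_re]
  rw [@norm_sub_sq 𝕜, hxp, hp]
  ring

end Bessel

namespace MeasureTheory

variable {X : Type*} [MeasurableSpace X] {ν : Measure X}

theorem MemLp.toLp_finsetSum {E ι : Type*} [NormedAddCommGroup E] {p : ENNReal}
    (t : Finset ι) {g : ι → X → E} (hg : ∀ i, MemLp (g i) p ν) :
    (memLp_finsetSum' t fun i _ => hg i).toLp (∑ i ∈ t, g i) = ∑ i ∈ t, (hg i).toLp (g i) := by
  classical
  induction t using Finset.induction_on with
  | empty => simp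
  | insert a t ha ih =>
    simp only [Finset.sum_insert ha, ← ih]
    exact MemLp.toLp_add (hg a) _

theorem MemLp.norm_toLp_sq {E : Type*} [NormedAddCommGroup E] {f : X → E} (hf : MemLp f 2 ν) :
    ‖hf.toLp f‖ ^ 2 = ∫ x, ‖f x‖ ^ 2 ∂ν := by
  rw [Lp.norm_toLp, toReal_eLpNorm hf.aestronglyMeasurable,
    lpNorm_eq_integral_norm_rpow_toReal two_ne_zero ENNReal.ofNat_ne_top hf.aestronglyMeasurable]
  simp only [ENNReal.toReal_ofNat, Real.rpow_two]
  exact Real.rpow_inv_natCast_pow (integral_nonneg fun x => by positivity) two_ne_zero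

variable {𝕜 E : Type*} [RCLike 𝕜] [NormedAddCommGroup E] [InnerProductSpace 𝕜 E]

local notation "⟪" x ", " y "⟫" => inner 𝕜 x y

theorem MemLp.inner_toLp {f g : X → E} (hf : MemLp f 2 ν) (hg : MemLp g 2 ν) :
    ⟪hf.toLp f, hg.toLp g⟫ = ∫ x, ⟪f x, g x⟫ ∂ν := by
  rw [L2.inner_def]
  refine integral_congr_ae ?_
  filter_upwards [hf.coeFn_toLp, hg.coeFn_toLp] with x hfx hgx
  rw [hfx, hgx]

theorem orthonormal_toLp_of_integral_mul_conj {ι : Type*} [DecidableEq ι] {s : ι → X → 𝕜}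
    (hs : ∀ i, MemLp (s i) 2 ν)
    (horth : ∀ i j, ∫ x, s i x * conj (s j x) ∂ν = if i = j then 1 else 0) :
    Orthonormal 𝕜 fun i => (hs i).toLp (s i) := by
  refine orthonormal_iff_ite.2 fun i j => ?_
  calc ⟪(hs i).toLp (s i), (hs j).toLp (s j)⟫
      = conj (∫ x, s i x * conj (s j x) ∂ν) := by
        rw [MemLp.inner_toLp, ← integral_conj]
        congr 1 with x
        rw [RCLike.inner_apply', map_mul, RCLike.conj_conj, mul_comm]
    _ = if i = j then 1 else 0 := by
        rw [horth i j]
        split_ifs <;> simp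

theorem integral_norm_sub_sum_integral_conj_mul_smul_sq {ι : Type*} [Fintype ι] {s : ι → X → 𝕜}
    (hs : ∀ i, MemLp (s i) 2 ν) (hv : Orthonormal 𝕜 fun i => (hs i).toLp (s i))
    {g : X → 𝕜} (hg : MemLp g 2 ν) :
    ∫ x, ‖g x - ∑ i, (∫ y, conj (s i y) * g y ∂ν) * s i x‖ ^ 2 ∂ν =
      ∫ x, ‖g x‖ ^ 2 ∂ν - ∑ i, ‖∫ y, conj (s i y) * g y ∂ν‖ ^ 2 := by
  set c := fun i => ∫ y, conj (s i y) * g y ∂ν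
  have hc : ∀ i, ⟪(hs i).toLp (s i), hg.toLp g⟫ = c i := fun i => by
    rw [MemLp.inner_toLp]
    simp only [RCLike.inner_apply', c]
  have hcs : ∀ i, MemLp (c i • s i) 2 ν := fun i => (hs i).const_smul (c i)
  have hdiff := hg.sub (memLp_finsetSum' Finset.univ fun i _ => hcs i)
  calc ∫ x, ‖g x - ∑ i, c i * s i x‖ ^ 2 ∂ν
      = ‖hdiff.toLp _‖ ^ 2 := by
        rw [hdiff.norm_toLp_sq]
        simp [Finset.sum_apply]
    _ = ‖hg.toLp g - ∑ i, c i • (hs i).toLp (s i)‖ ^ 2 := by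
        rw [MemLp.toLp_sub hg (memLp_finsetSum' _ fun i _ => hcs i), MemLp.toLp_finsetSum _ hcs]
        congr 3 with i
    _ = ‖hg.toLp g‖ ^ 2 - ∑ i, ‖c i‖ ^ 2 := by
        simp only [← hc]
        exact hv.norm_sub_sum_inner_smul_sq _ _
    _ = _ := by rw [hg.norm_toLp_sq]

end MeasureTheory

/-- **Toeplitz trace inequality.** Let `H ⊂ L²(ν)` be the `N`-dimensional subspace with
orthonormal basis `(sᵢ)`, `Π` the orthogonal projection onto `H` (so
`Π g = Σᵢ ⟨sᵢ, g⟩ sᵢ`), and `T[f] = Π ∘ M_f` the Toeplitz operator with bounded real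
symbol `f`. Then `Tr(T[f²]) − Tr(T[f]²) = Σⱼ ‖f sⱼ − Π(f sⱼ)‖² ≥ 0`; in particular
`Tr(T[f]²) ≤ Tr(T[f²])`. Here `Tr(T[f²]) = Σⱼ ∫ f² |sⱼ|² dν` and
`Tr(T[f]²) = Σᵢⱼ |cᵢⱼ|²` with `cᵢⱼ = ∫ f s̄ᵢ sⱼ dν`. -/
theorem toeplitz_trace_inequality
    {X : Type*} [MeasurableSpace X] (ν : Measure X) (N : ℕ)
    (s : Fin N → X → ℂ) (hs : ∀ i, MemLp (s i) 2 ν)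
    (horth : ∀ i j, (∫ x, s i x * (starRingEnd ℂ) (s j x) ∂ν) = if i = j then 1 else 0)
    (f : X → ℝ) (hf : Measurable f) (C : ℝ) (hfC : ∀ x, |f x| ≤ C) :
    ((∑ j, ∫ x, f x ^ 2 * ‖s j x‖ ^ 2 ∂ν) -
        ∑ i, ∑ j, ‖∫ x, (f x : ℂ) * ((starRingEnd ℂ) (s i x) * s j x) ∂ν‖ ^ 2 =
      ∑ j, ∫ x, ‖(f x : ℂ) * s j x -
          ∑ i, (∫ y, (f y : ℂ) * ((starRingEnd ℂ) (s i y) * s j y) ∂ν) * s i x‖ ^ 2 ∂ν) ∧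
    (∑ i, ∑ j, ‖∫ x, (f x : ℂ) * ((starRingEnd ℂ) (s i x) * s j x) ∂ν‖ ^ 2) ≤
      ∑ j, ∫ x, f x ^ 2 * ‖s j x‖ ^ 2 ∂ν := by
  have hF : MemLp (fun x => (f x : ℂ)) ⊤ ν :=
    memLp_top_of_bound (Complex.measurable_ofReal.comp hf).aestronglyMeasurable C
      (.of_forall fun x => by simpa using hfC x)
  have hfs : ∀ j, MemLp (fun x => (f x : ℂ) * s j x) 2 ν := fun j => (hs j).mul' hF
  have hv := orthonormal_toLp_of_integral_mul_conj hs horth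
  have hcoef : ∀ i j, ∫ y, (f y : ℂ) * (conj (s i y) * s j y) ∂ν =
      ∫ y, conj (s i y) * ((f y : ℂ) * s j y) ∂ν := fun i j =>
    integral_congr_ae (.of_forall fun y => mul_left_comm _ _ _)
  have hsum : (∑ j, ∫ x, f x ^ 2 * ‖s j x‖ ^ 2 ∂ν) -
      ∑ i, ∑ j, ‖∫ x, (f x : ℂ) * (conj (s i x) * s j x) ∂ν‖ ^ 2 =
      ∑ j, ∫ x, ‖(f x : ℂ) * s j x -
        ∑ i, (∫ y, (f y : ℂ) * (conj (s i y) * s j y) ∂ν) * s i x‖ ^ 2 ∂ν := by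
    rw [Finset.sum_comm, ← Finset.sum_sub_distrib]
    refine Finset.sum_congr rfl fun j _ => ?_
    simpa only [hcoef, norm_mul, mul_pow, Complex.norm_real, Real.norm_eq_abs, sq_abs]
      using (integral_norm_sub_sum_integral_conj_mul_smul_sq hs hv (hfs j)).symm
  refine ⟨hsum, sub_nonneg.1 ?_⟩
  rw [hsum]
  exact Finset.sum_nonneg fun j _ => integral_nonneg fun x => by positivity
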